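/- Let S be a countable Boolean inverse ∧-monoid. If S is 0-simplifying then either the Boolean algebra E(S) of idempotents is atomless or E(S) is finite. -/

import Mathlib

universe u

/-- An inverse monoid with zero: every element `a` has a unique generalized
inverse `a⁻¹`, and `0` is an absorbing element. -/
class InverseMonoidWithZero (S : Type u) extends Monoid S, Zero S, Inv S where
  zero_mul' : ∀ a : S, 0 * a = 0
  mul_zero' : ∀ a : S, a * 0 = 0
  mul_inv_mul : ∀ a : S, a * a⁻¹ * a = a
  inv_mul_inv : ∀ a : S, a⁻¹ * a * a⁻¹ = a⁻¹
  inv_unique : ∀ a b : S, a * b * a = a → b * a * b = b → b = a⁻¹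

section BasicDefs

variable {S : Type u}

/-- The natural partial order: `a ≤ b` iff `a = e * b` for some idempotent `e`. -/
def nle [InverseMonoidWithZero S] (a b : S) : Prop :=
  ∃ e : S, e * e = e ∧ a = e * b

/-- `a` and `b` are compatible if `a * b⁻¹` and `a⁻¹ * b` are idempotents. -/
def Compat [InverseMonoidWithZero S] (a b : S) : Prop :=
  (a * b⁻¹) * (a * b⁻¹) = a * b⁻¹ ∧ (a⁻¹ * b) * (a⁻¹ * b) = a⁻¹ * b

/-- `a` and `b` are orthogonal if `a * b⁻¹ = 0` and `a⁻¹ * b = 0`. -/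
def Orth [InverseMonoidWithZero S] (a b : S) : Prop :=
  a * b⁻¹ = 0 ∧ a⁻¹ * b = 0

end BasicDefs

/-- A distributive inverse monoid: every compatible pair has a join (for the
natural partial order), recorded by `sup`, and multiplication distributes over
these binary joins. -/
class DistributiveInverseMonoid (S : Type u) extends InverseMonoidWithZero S where
  sup : S → S → S
  le_sup_left : ∀ a b : S, Compat a b → nle a (sup a b)
  le_sup_right : ∀ a b : S, Compat a b → nle b (sup a b)
  sup_le : ∀ a b c : S, Compat a b → nle a c → nle b c → nle (sup a b) c
  mul_sup : ∀ a b c : S, Compat a b → c * sup a b = sup (c * a) (c * b)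
  sup_mul : ∀ a b c : S, Compat a b → sup a b * c = sup (a * c) (b * c)

/-- A Boolean inverse monoid: a distributive inverse monoid whose idempotents
form a Boolean algebra under the natural partial order; `compl` records the
complementation on idempotents. -/
class BooleanInverseMonoid (S : Type u) extends DistributiveInverseMonoid S where
  compl : S → S
  compl_idem : ∀ e : S, e * e = e → compl e * compl e = compl e
  mul_compl : ∀ e : S, e * e = e → e * compl e = 0
  sup_compl : ∀ e : S, e * e = e → sup e (compl e) = 1

/-- A Boolean inverse ∧-monoid: a Boolean inverse monoid in which every pair of
elements has a meet with respect to the natural partial order. -/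
class BooleanInverseMeetMonoid (S : Type u) extends BooleanInverseMonoid S where
  inf : S → S → S
  inf_le_left : ∀ a b : S, nle (inf a b) a
  inf_le_right : ∀ a b : S, nle (inf a b) b
  le_inf : ∀ a b c : S, nle c a → nle c b → nle c (inf a b)

section MoreDefs

variable {S : Type u}

/-- The join of a compatible pair. -/
def bsup [DistributiveInverseMonoid S] (a b : S) : S := DistributiveInverseMonoid.sup a b

/-- Complementation in the Boolean algebra of idempotents. -/
def bcompl [BooleanInverseMonoid S] (e : S) : S := BooleanInverseMonoid.compl e

/-- The binary meet. -/
def binf [BooleanInverseMeetMonoid S] (a b : S) : S := BooleanInverseMeetMonoid.inf a b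

/-- The fixed-point operator `φ(s) = s ∧ 1`. -/
def phi [BooleanInverseMeetMonoid S] (s : S) : S := binf s 1

/-- The support operator `σ(s) = \overline{φ(s)} ⋅ s⁻¹ s`. -/
def sigma [BooleanInverseMeetMonoid S] (s : S) : S := bcompl (phi s) * (s⁻¹ * s)

/-- An infinitesimal is a non-zero element that squares to zero. -/
def Infinitesimal [InverseMonoidWithZero S] (a : S) : Prop := a ≠ 0 ∧ a * a = 0

/-- A (two-sided) ideal. -/
def IsMIdeal [InverseMonoidWithZero S] (I : Set S) : Prop :=
  I.Nonempty ∧ ∀ a ∈ I, ∀ s : S, s * a ∈ I ∧ a * s ∈ I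

/-- A ∨-ideal: an ideal closed under joins of compatible pairs. -/
def IsVIdeal [DistributiveInverseMonoid S] (I : Set S) : Prop :=
  IsMIdeal I ∧ ∀ a ∈ I, ∀ b ∈ I, Compat a b → bsup a b ∈ I

end MoreDefs

/-- 0-simplifying: the only ∨-ideals are `{0}` and `S`. -/
def ZeroSimplifying (S : Type u) [DistributiveInverseMonoid S] : Prop :=
  ∀ I : Set S, IsVIdeal I → I = {0} ∨ I = Set.univ

/-- 0-simple: non-trivial and the only ideals are `{0}` and `S`. -/
def ZeroSimple (S : Type u) [InverseMonoidWithZero S] : Prop :=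
  (∃ s : S, s ≠ 0) ∧ ∀ I : Set S, IsMIdeal I → I = {0} ∨ I = Set.univ

/-- Fundamental: every element commuting with all idempotents is an idempotent. -/
def Fundamental (S : Type u) [InverseMonoidWithZero S] : Prop :=
  ∀ a : S, (∀ e : S, e * e = e → a * e = e * a) → a * a = a

/-- The Boolean algebra of idempotents is atomless. -/
def IdemAtomless (S : Type u) [InverseMonoidWithZero S] : Prop :=
  ∀ e : S, e * e = e → e ≠ 0 → ∃ f : S, f * f = f ∧ f ≠ 0 ∧ nle f e ∧ f ≠ e

section Filters

variable {S : Type u}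

/-- A filter in a Boolean inverse ∧-monoid: a nonempty subset closed under
binary meets and upward closed in the natural partial order. -/
def IsMFilter [BooleanInverseMeetMonoid S] (A : Set S) : Prop :=
  A.Nonempty ∧ (∀ a ∈ A, ∀ b ∈ A, binf a b ∈ A) ∧ ∀ a ∈ A, ∀ b : S, nle a b → b ∈ A

/-- An ultrafilter: a maximal proper filter. -/
def IsMUltrafilter [BooleanInverseMeetMonoid S] (A : Set S) : Prop :=
  IsMFilter A ∧ (0 : S) ∉ A ∧ ∀ B : Set S, IsMFilter B → (0 : S) ∉ B → A ⊆ B → A = B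

/-- A filter of the Boolean algebra of idempotents (meet of idempotents is
their product). -/
def IsIdemFilter [InverseMonoidWithZero S] (F : Set S) : Prop :=
  F.Nonempty ∧ (∀ e ∈ F, e * e = e) ∧ (∀ e ∈ F, ∀ f ∈ F, e * f ∈ F) ∧
    ∀ e ∈ F, ∀ f : S, f * f = f → nle e f → f ∈ F

/-- An ultrafilter of the Boolean algebra of idempotents. -/
def IsIdemUltrafilter [InverseMonoidWithZero S] (F : Set S) : Prop :=
  IsIdemFilter F ∧ (0 : S) ∉ F ∧
    ∀ G : Set S, IsIdemFilter G → (0 : S) ∉ G → F ⊆ G → F = G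

end Filters

section PencilDefs

variable {S : Type u}

/-- `Preceq e f`: there is a pencil from `e` to `f`, i.e. finitely many
elements `x₁, …, xₘ` with `r(xᵢ) ≤ f` for all `i` and `e = ⋁ d(xᵢ)`
(a least upper bound for the natural partial order). -/
def Preceq [DistributiveInverseMonoid S] (e f : S) : Prop :=
  ∃ l : List S, l ≠ [] ∧ (∀ x ∈ l, nle (x * x⁻¹) f) ∧
    (∀ x ∈ l, nle (x⁻¹ * x) e) ∧ ∀ c : S, (∀ x ∈ l, nle (x⁻¹ * x) c) → nle e c

/-- Piecewise factorizable: every element is a finite join of elements each of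
which lies beneath a unit. -/
def PiecewiseFactorizable (S : Type u) [DistributiveInverseMonoid S] : Prop :=
  ∀ s : S, ∃ l : List S, l ≠ [] ∧ (∀ x ∈ l, ∃ g : S, IsUnit g ∧ nle x g) ∧
    (∀ x ∈ l, nle x s) ∧ ∀ c : S, (∀ x ∈ l, nle x c) → nle s c

/-- A properly infinite idempotent. -/
def ProperlyInfinite [DistributiveInverseMonoid S] (e : S) : Prop :=
  ∃ x y : S, x⁻¹ * x = e ∧ y⁻¹ * y = e ∧ Orth (x * x⁻¹) (y * y⁻¹) ∧
    nle (bsup (x * x⁻¹) (y * y⁻¹)) e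

end PencilDefs

/-- Purely infinite: every non-zero idempotent is properly infinite. -/
def PurelyInfinite (S : Type u) [DistributiveInverseMonoid S] : Prop :=
  ∀ e : S, e * e = e → e ≠ 0 → ProperlyInfinite e

/-!
Suppose `E(S)` has an atom `e`. The elements `s` whose domain `d(s) = s⁻¹s` has only finitely
many idempotents below it form a ∨-ideal: `d(ts) ≤ d(s)`; `d(st)` is handled through the range,
because `f ↦ x f x⁻¹` embeds the idempotents below `d(x)` into those below `r(x) = xx⁻¹` and
`r(st) ≤ r(s)`; and `d(a ∨ b) = d(a) ∨ d(b)`, where every idempotent `g ≤ d(a) ∨ d(b)` is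
`g d(a) ∨ g d(b)`. This ideal contains `e`, so 0-simplicity forces it to contain `1`, and then
`E(S)`, the set of idempotents below `1`, is finite.
-/

open InverseMonoidWithZero

section InverseMonoid

variable {S : Type u} [InverseMonoidWithZero S]

theorem inv_inv_eq (a : S) : a⁻¹⁻¹ = a :=
  (inv_unique a⁻¹ a (inv_mul_inv a) (mul_inv_mul a)).symm

theorem inv_eq_self_of_idem {e : S} (he : e * e = e) : e⁻¹ = e :=
  (inv_unique e e (by rw [he, he]) (by rw [he, he])).symm

theorem mul_inv_idem (a : S) : a * a⁻¹ * (a * a⁻¹) = a * a⁻¹ := by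
  rw [← mul_assoc, mul_inv_mul]

theorem inv_mul_idem (a : S) : a⁻¹ * a * (a⁻¹ * a) = a⁻¹ * a := by
  rw [← mul_assoc, inv_mul_inv]

/-- `f (ef)⁻¹ e` is an inverse of `ef`, hence equals `(ef)⁻¹`, which makes `(ef)⁻¹` idempotent. -/
theorem idem_mul_idem {e f : S} (he : e * e = e) (hf : f * f = f) :
    e * f * (e * f) = e * f := by
  set x := (e * f)⁻¹
  have hx₁ : e * f * x * (e * f) = e * f := mul_inv_mul _
  have hx₂ : x * (e * f) * x = x := inv_mul_inv _
  have hfxe : f * x * e = x := by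
    refine inv_unique (e * f) (f * x * e) ?_ ?_
    · calc e * f * (f * x * e) * (e * f) = e * (f * f) * x * (e * e) * f := by
            simp only [mul_assoc]
        _ = e * f * x * (e * f) := by rw [he, hf]; simp only [mul_assoc]
        _ = e * f := hx₁
    · calc f * x * e * (e * f) * (f * x * e) = f * (x * (e * e) * (f * f) * x) * e := by
            simp only [mul_assoc]
        _ = f * (x * (e * f) * x) * e := by rw [he, hf]; simp only [mul_assoc]
        _ = f * x * e := by rw [hx₂]
  have hxx : x * x = x := by
    calc x * x = f * (x * (e * f) * x) * e := by
          conv_lhs => rw [← hfxe]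
          simp only [mul_assoc]
      _ = x := by rw [hx₂, hfxe]
  have hef : e * f = x := (inv_inv_eq (e * f)).symm.trans (inv_eq_self_of_idem hxx)
  rw [hef, hxx]

theorem idem_comm {e f : S} (he : e * e = e) (hf : f * f = f) : e * f = f * e := by
  refine (inv_eq_self_of_idem (idem_mul_idem he hf)).symm.trans
    (inv_unique (e * f) (f * e) ?_ ?_).symm
  · calc e * f * (f * e) * (e * f) = e * (f * f) * (e * e) * f := by simp only [mul_assoc]
      _ = e * f * (e * f) := by rw [he, hf]; simp only [mul_assoc]
      _ = e * f := idem_mul_idem he hf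
  · calc f * e * (e * f) * (f * e) = f * (e * e) * (f * f) * e := by simp only [mul_assoc]
      _ = f * e * (f * e) := by rw [he, hf]; simp only [mul_assoc]
      _ = f * e := idem_mul_idem hf he

theorem mul_inv_rev' (a b : S) : (a * b)⁻¹ = b⁻¹ * a⁻¹ := by
  refine (inv_unique (a * b) (b⁻¹ * a⁻¹) ?_ ?_).symm
  · calc a * b * (b⁻¹ * a⁻¹) * (a * b) = a * ((a⁻¹ * a) * (b * b⁻¹)) * b := by
          rw [idem_comm (inv_mul_idem a) (mul_inv_idem b)]; simp only [mul_assoc]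
      _ = a * a⁻¹ * a * (b * b⁻¹ * b) := by simp only [mul_assoc]
      _ = a * b := by rw [mul_inv_mul, mul_inv_mul]
  · calc b⁻¹ * a⁻¹ * (a * b) * (b⁻¹ * a⁻¹) = b⁻¹ * ((b * b⁻¹) * (a⁻¹ * a)) * a⁻¹ := by
          rw [idem_comm (mul_inv_idem b) (inv_mul_idem a)]; simp only [mul_assoc]
      _ = b⁻¹ * b * b⁻¹ * (a⁻¹ * a * a⁻¹) := by simp only [mul_assoc]
      _ = b⁻¹ * a⁻¹ := by rw [inv_mul_inv, inv_mul_inv]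

theorem nle_of_mul_eq {a b : S} (ha : a * a = a) (h : a * b = a) : nle a b :=
  ⟨a, ha, h.symm⟩

theorem mul_eq_of_nle {a b : S} (hb : b * b = b) (h : nle a b) : a * b = a := by
  obtain ⟨g, -, rfl⟩ := h
  rw [mul_assoc, hb]

theorem nle_trans {a b c : S} (hab : nle a b) (hbc : nle b c) : nle a c := by
  obtain ⟨g, hg, rfl⟩ := hab
  obtain ⟨h, hh, rfl⟩ := hbc
  exact ⟨g * h, idem_mul_idem hg hh, (mul_assoc g h c).symm⟩

theorem nle_one_of_idem {e : S} (he : e * e = e) : nle e 1 :=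
  nle_of_mul_eq he (mul_one e)

theorem idem_of_nle_one {a : S} (h : nle a 1) : a * a = a := by
  obtain ⟨g, hg, rfl⟩ := h
  rwa [mul_one]

theorem eq_zero_of_nle_zero {a : S} (h : nle a 0) : a = 0 := by
  obtain ⟨g, -, rfl⟩ := h
  exact mul_zero' g

theorem inv_mul_of_nle {s u : S} (h : nle s u) : u⁻¹ * s = s⁻¹ * s := by
  obtain ⟨g, hg, rfl⟩ := h
  calc u⁻¹ * (g * u) = u⁻¹ * (g * g) * u := by rw [hg, mul_assoc]
    _ = (g * u)⁻¹ * (g * u) := by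
      rw [mul_inv_rev', inv_eq_self_of_idem hg]; simp only [mul_assoc]

theorem inv_mul_nle_inv_mul (s a : S) : nle ((s * a)⁻¹ * (s * a)) (a⁻¹ * a) :=
  nle_of_mul_eq (inv_mul_idem _) <| by
    rw [mul_assoc, mul_assoc s, ← mul_assoc a, mul_inv_mul]

theorem mul_inv_nle_mul_inv (a s : S) : nle (a * s * (a * s)⁻¹) (a * a⁻¹) :=
  nle_of_mul_eq (mul_inv_idem _) <| by
    rw [idem_comm (mul_inv_idem _) (mul_inv_idem a), ← mul_assoc, ← mul_assoc, mul_inv_mul]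

def idempotentsBelow (e : S) : Set S := {f | f * f = f ∧ nle f e}

theorem idempotentsBelow_mono {e e' : S} (h : nle e e') :
    idempotentsBelow e ⊆ idempotentsBelow e' :=
  fun _ ⟨hf, hfe⟩ => ⟨hf, nle_trans hfe h⟩

theorem idempotentsBelow_one : idempotentsBelow (1 : S) = {e | e * e = e} :=
  Set.ext fun _ => ⟨And.left, fun he => ⟨he, nle_one_of_idem he⟩⟩

theorem finite_idempotentsBelow_of_atom {e : S}
    (hatom : ∀ f : S, f * f = f → f ≠ 0 → nle f e → f = e) :
    (idempotentsBelow e).Finite := by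
  refine (Set.toFinite {0, e}).subset fun f ⟨hf, hfe⟩ => ?_
  by_cases hf0 : f = 0
  · exact Or.inl hf0
  · exact Or.inr (hatom f hf hf0 hfe)

/-- Conjugation `f ↦ x f x⁻¹` maps `(x⁻¹x)↓` into `(xx⁻¹)↓`, with left inverse `g ↦ x⁻¹ g x`. -/
theorem finite_idempotentsBelow_inv_mul {x : S} (h : (idempotentsBelow (x * x⁻¹)).Finite) :
    (idempotentsBelow (x⁻¹ * x)).Finite := by
  refine (h.image fun g => x⁻¹ * g * x).subset fun f ⟨hf, hfd⟩ => ?_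
  have hfd' : f * (x⁻¹ * x) = f := mul_eq_of_nle (inv_mul_idem x) hfd
  have hdf : x⁻¹ * x * f = f := by rw [idem_comm (inv_mul_idem x) hf, hfd']
  have hconj : x * f * x⁻¹ * (x * f * x⁻¹) = x * f * x⁻¹ := by
    calc x * f * x⁻¹ * (x * f * x⁻¹) = x * (f * (x⁻¹ * x) * f) * x⁻¹ := by simp only [mul_assoc]
      _ = x * f * x⁻¹ := by rw [hfd', hf]
  refine ⟨x * f * x⁻¹, ⟨hconj, nle_of_mul_eq hconj ?_⟩, ?_⟩
  · rw [mul_assoc (x * f), ← mul_assoc x⁻¹, inv_mul_inv]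
  · calc x⁻¹ * (x * f * x⁻¹) * x = x⁻¹ * x * f * (x⁻¹ * x) := by simp only [mul_assoc]
      _ = f := by rw [hdf, hfd']

theorem finite_idempotentsBelow_mul_inv {x : S} (h : (idempotentsBelow (x⁻¹ * x)).Finite) :
    (idempotentsBelow (x * x⁻¹)).Finite := by
  have := finite_idempotentsBelow_inv_mul (x := x⁻¹)
  rw [inv_inv_eq] at this
  exact this h

end InverseMonoid

section Distributive

variable {S : Type u} [DistributiveInverseMonoid S]

theorem compat_of_idem {e f : S} (he : e * e = e) (hf : f * f = f) : Compat e f := by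
  unfold Compat
  rw [inv_eq_self_of_idem he, inv_eq_self_of_idem hf]
  exact ⟨idem_mul_idem he hf, idem_mul_idem he hf⟩

theorem bsup_idem {e f : S} (he : e * e = e) (hf : f * f = f) :
    bsup e f * bsup e f = bsup e f :=
  idem_of_nle_one <| DistributiveInverseMonoid.sup_le e f 1 (compat_of_idem he hf)
    (nle_one_of_idem he) (nle_one_of_idem hf)

theorem inv_mul_bsup {a b : S} (hab : Compat a b) :
    (bsup a b)⁻¹ * bsup a b = bsup (a⁻¹ * a) (b⁻¹ * b) := by
  unfold bsup
  rw [DistributiveInverseMonoid.mul_sup a b _ hab,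
    inv_mul_of_nle (DistributiveInverseMonoid.le_sup_left a b hab),
    inv_mul_of_nle (DistributiveInverseMonoid.le_sup_right a b hab)]

/-- Every `g ≤ e ∨ f` splits as `ge ∨ gf` by distributivity. -/
theorem finite_idempotentsBelow_bsup {e f : S} (he : e * e = e) (hf : f * f = f)
    (hfe : (idempotentsBelow e).Finite) (hff : (idempotentsBelow f).Finite) :
    (idempotentsBelow (bsup e f)).Finite := by
  refine (hfe.image2 bsup hff).subset fun g ⟨hg, hge⟩ => ?_
  refine ⟨g * e, ⟨idem_mul_idem hg he, g, hg, rfl⟩, g * f, ⟨idem_mul_idem hg hf, g, hg, rfl⟩, ?_⟩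
  calc bsup (g * e) (g * f) = g * bsup e f :=
        (DistributiveInverseMonoid.mul_sup e f g (compat_of_idem he hf)).symm
    _ = g := mul_eq_of_nle (bsup_idem he hf) hge

def finiteDomainIdeal (S : Type u) [DistributiveInverseMonoid S] : Set S :=
  {s | (idempotentsBelow (s⁻¹ * s)).Finite}

theorem isVIdeal_finiteDomainIdeal : IsVIdeal (finiteDomainIdeal S) := by
  refine ⟨⟨⟨0, ?_⟩, fun a ha s => ⟨?_, ?_⟩⟩, fun a ha b hb hab => ?_⟩
  · refine (Set.finite_singleton 0).subset fun f ⟨_, hf⟩ => ?_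
    rw [mul_zero'] at hf
    exact eq_zero_of_nle_zero hf
  · exact ha.subset (idempotentsBelow_mono (inv_mul_nle_inv_mul s a))
  · exact finite_idempotentsBelow_inv_mul <|
      (finite_idempotentsBelow_mul_inv ha).subset (idempotentsBelow_mono (mul_inv_nle_mul_inv a s))
  · change (idempotentsBelow _).Finite
    rw [inv_mul_bsup hab]
    exact finite_idempotentsBelow_bsup (inv_mul_idem a) (inv_mul_idem b) ha hb

theorem finite_idempotents_of_atom (hS : ZeroSimplifying S) {e : S} (he : e * e = e)
    (he0 : e ≠ 0) (hatom : ∀ f : S, f * f = f → f ≠ 0 → nle f e → f = e) :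
    {e : S | e * e = e}.Finite := by
  have heI : e ∈ finiteDomainIdeal S := by
    change (idempotentsBelow _).Finite
    rw [inv_eq_self_of_idem he, he]
    exact finite_idempotentsBelow_of_atom hatom
  rcases hS _ isVIdeal_finiteDomainIdeal with hI | hI
  · rw [hI] at heI
    exact absurd heI he0
  · have h1 : (1 : S) ∈ finiteDomainIdeal S := by rw [hI]; trivial
    change (idempotentsBelow _).Finite at h1
    rwa [inv_eq_self_of_idem (one_mul 1), one_mul, idempotentsBelow_one] at h1

end Distributive

theorem statement4_general (S : Type u) [BooleanInverseMeetMonoid S]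
    (h : ZeroSimplifying S) :
    IdemAtomless S ∨ {e : S | e * e = e}.Finite := by
  by_cases hA : IdemAtomless S
  · exact Or.inl hA
  · simp only [IdemAtomless, not_forall, not_exists, not_and, not_not] at hA
    obtain ⟨e, he, he0, hatom⟩ := hA
    exact Or.inr (finite_idempotents_of_atom h he he0 hatom)

/-- If a countable Boolean inverse ∧-monoid is 0-simplifying,
then its Boolean algebra of idempotents is atomless or finite. -/
theorem statement4 (S : Type u) [BooleanInverseMeetMonoid S] [Countable S]
    (h : ZeroSimplifying S) :
    IdemAtomless S ∨ {e : S | e * e = e}.Finite :=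
  statement4_general S h
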